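/- Let u : ℝ × ℝ → ℝ be smooth and let λ ∈ ℝ, α ∈ ℝ. Suppose ψ : ℝ × ℝ → ℝ is smooth, nowhere zero, and satisfies both ∂ₓ²ψ + (u + λ)ψ = 0 and ∂ₜψ = αψ − 4∂ₓ³ψ − 6u∂ₓψ − 3(∂ₓu)ψ for all (x,t). Then u satisfies the KdV equation ∂ₜu + ∂ₓ³u + 6u∂ₓu = 0. -/

import Mathlib

noncomputable def Dx (G : ℝ × ℝ → ℝ) : ℝ × ℝ → ℝ := fun p => fderiv ℝ G p (1, 0)
noncomputable def Dt' (G : ℝ × ℝ → ℝ) : ℝ × ℝ → ℝ := fun p => fderiv ℝ G p (0, 1)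

lemma Dx_contDiff {G : ℝ × ℝ → ℝ} (hG : ContDiff ℝ (⊤ : ℕ∞) G) : ContDiff ℝ (⊤ : ℕ∞) (Dx G) :=
  (hG.fderiv_right (by simp)).clm_apply contDiff_const

lemma Dt'_contDiff {G : ℝ × ℝ → ℝ} (hG : ContDiff ℝ (⊤ : ℕ∞) G) : ContDiff ℝ (⊤ : ℕ∞) (Dt' G) :=
  (hG.fderiv_right (by simp)).clm_apply contDiff_const

lemma hasDerivAt_Dx {G : ℝ × ℝ → ℝ} (hG : ContDiff ℝ (⊤ : ℕ∞) G) (x t : ℝ) :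
    HasDerivAt (fun x' => G (x', t)) (Dx G (x, t)) x := by
  have h1 : HasDerivAt (fun x' : ℝ => ((x', t) : ℝ × ℝ)) ((1 : ℝ), (0 : ℝ)) x :=
    (hasDerivAt_id x).prodMk (hasDerivAt_const x t)
  exact ((hG.differentiable (by simp) (x, t)).hasFDerivAt).comp_hasDerivAt x h1

lemma hasDerivAt_Dt' {G : ℝ × ℝ → ℝ} (hG : ContDiff ℝ (⊤ : ℕ∞) G) (x t : ℝ) :
    HasDerivAt (fun t' => G (x, t')) (Dt' G (x, t)) t := by
  have h1 : HasDerivAt (fun t' : ℝ => ((x, t') : ℝ × ℝ)) ((0 : ℝ), (1 : ℝ)) t :=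
    (hasDerivAt_const t x).prodMk (hasDerivAt_id t)
  exact ((hG.differentiable (by simp) (x, t)).hasFDerivAt).comp_hasDerivAt t h1

lemma Dswap {G : ℝ × ℝ → ℝ} (hG : ContDiff ℝ (⊤ : ℕ∞) G) : Dt' (Dx G) = Dx (Dt' G) := by
  funext p
  have hdG : ∀ y, HasFDerivAt G (fderiv ℝ G y) y := fun y =>
    (hG.differentiable (by simp) y).hasFDerivAt
  have hd2 : HasFDerivAt (fderiv ℝ G) (fderiv ℝ (fderiv ℝ G) p) p :=
    (((hG.fderiv_right (m := (⊤ : ℕ∞)) (by simp)).differentiable (by simp)) p).hasFDerivAt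
  have hsymm := second_derivative_symmetric hdG hd2 ((0:ℝ),(1:ℝ)) ((1:ℝ),(0:ℝ))
  have hx : HasFDerivAt (Dx G)
      ((ContinuousLinearMap.apply ℝ ℝ (((1:ℝ),(0:ℝ)) : ℝ × ℝ)).comp
        (fderiv ℝ (fderiv ℝ G) p)) p :=
    (ContinuousLinearMap.apply ℝ ℝ (((1:ℝ),(0:ℝ)) : ℝ × ℝ)).hasFDerivAt.comp p hd2
  have ht : HasFDerivAt (Dt' G)
      ((ContinuousLinearMap.apply ℝ ℝ (((0:ℝ),(1:ℝ)) : ℝ × ℝ)).comp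
        (fderiv ℝ (fderiv ℝ G) p)) p :=
    (ContinuousLinearMap.apply ℝ ℝ (((0:ℝ),(1:ℝ)) : ℝ × ℝ)).hasFDerivAt.comp p hd2
  have e1 : Dt' (Dx G) p = fderiv ℝ (fderiv ℝ G) p (0,1) (1,0) := by
    show fderiv ℝ (Dx G) p (0,1) = _
    rw [hx.fderiv]; rfl
  have e2 : Dx (Dt' G) p = fderiv ℝ (fderiv ℝ G) p (1,0) (0,1) := by
    show fderiv ℝ (Dt' G) p (1,0) = _
    rw [ht.fderiv]; rfl
  rw [e1, e2, hsymm]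

/-- If a smooth nowhere-zero `ψ` satisfies both members of the KdV Lax pair
`∂ₓ²ψ + (u + λ)ψ = 0` and `∂ₜψ = αψ − 4∂ₓ³ψ − 6u∂ₓψ − 3(∂ₓu)ψ`, then `u`
satisfies the KdV equation. -/
theorem kdv_lax_pair_compatibility (u ψ : ℝ → ℝ → ℝ) (lam α : ℝ)
    (hu : ContDiff ℝ (⊤ : ℕ∞) (fun p : ℝ × ℝ => u p.1 p.2))
    (hψ : ContDiff ℝ (⊤ : ℕ∞) (fun p : ℝ × ℝ => ψ p.1 p.2))
    (hne : ∀ x t, ψ x t ≠ 0)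
    (heig : ∀ x t : ℝ,
      iteratedDeriv 2 (fun x' => ψ x' t) x + (u x t + lam) * ψ x t = 0)
    (hevol : ∀ x t : ℝ,
      deriv (fun t' => ψ x t') t =
        α * ψ x t - 4 * iteratedDeriv 3 (fun x' => ψ x' t) x
          - 6 * u x t * deriv (fun x' => ψ x' t) x
          - 3 * deriv (fun x' => u x' t) x * ψ x t) :
    ∀ x t : ℝ,
      deriv (fun t' => u x t') t + iteratedDeriv 3 (fun x' => u x' t) x
        + 6 * u x t * deriv (fun x' => u x' t) x = 0 := by
  set Ψ : ℝ × ℝ → ℝ := fun p => ψ p.1 p.2 with hΨdef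
  set U : ℝ × ℝ → ℝ := fun p => u p.1 p.2 with hUdef
  have hb : ContDiff ℝ (⊤ : ℕ∞) (Dx Ψ) := Dx_contDiff hψ
  have hc : ContDiff ℝ (⊤ : ℕ∞) (Dx (Dx Ψ)) := Dx_contDiff hb
  have hW : ContDiff ℝ (⊤ : ℕ∞) (Dt' Ψ) := Dt'_contDiff hψ
  have hdW : ContDiff ℝ (⊤ : ℕ∞) (Dx (Dt' Ψ)) := Dx_contDiff hW
  have hU1 : ContDiff ℝ (⊤ : ℕ∞) (Dx U) := Dx_contDiff hu
  have hU2 : ContDiff ℝ (⊤ : ℕ∞) (Dx (Dx U)) := Dx_contDiff hU1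
  -- translation of iterated x-derivatives of ψ
  have dψ : ∀ t : ℝ, (deriv fun x' => ψ x' t) = fun y => Dx Ψ (y, t) := fun t =>
    funext fun y => (hasDerivAt_Dx hψ y t).deriv
  have e2ψ : ∀ x t : ℝ, iteratedDeriv 2 (fun x' => ψ x' t) x = Dx (Dx Ψ) (x, t) := by
    intro x t
    rw [iteratedDeriv_succ, iteratedDeriv_one, dψ t]
    exact (hasDerivAt_Dx hb x t).deriv
  have e3ψ : ∀ x t : ℝ, iteratedDeriv 3 (fun x' => ψ x' t) x = Dx (Dx (Dx Ψ)) (x, t) := by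
    intro x t
    rw [iteratedDeriv_succ, iteratedDeriv_succ, iteratedDeriv_one, dψ t]
    have : (deriv fun y => Dx Ψ (y, t)) = fun y => Dx (Dx Ψ) (y, t) :=
      funext fun y => (hasDerivAt_Dx hb y t).deriv
    rw [this]
    exact (hasDerivAt_Dx hc x t).deriv
  -- eigenvalue equation
  have eA : ∀ x t : ℝ, Dx (Dx Ψ) (x, t) + (U (x, t) + lam) * Ψ (x, t) = 0 := by
    intro x t
    rw [← e2ψ x t]
    exact heig x t
  -- x-derivative of eigenvalue equation
  have eB : ∀ x t : ℝ,
      Dx (Dx (Dx Ψ)) (x, t) + Dx U (x, t) * Ψ (x, t) + (U (x, t) + lam) * Dx Ψ (x, t) = 0 := by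
    intro x t
    have hA1 := hasDerivAt_Dx hc x t
    have hA2 : HasDerivAt (fun x' => (U (x', t) + lam) * Ψ (x', t))
        (Dx U (x, t) * Ψ (x, t) + (U (x, t) + lam) * Dx Ψ (x, t)) x :=
      ((hasDerivAt_Dx hu x t).add_const lam).mul (hasDerivAt_Dx hψ x t)
    have hsum := hA1.add hA2
    have hzero : (fun x' => Dx (Dx Ψ) (x', t) + (U (x', t) + lam) * Ψ (x', t))
        = fun _ : ℝ => (0 : ℝ) := funext fun y => eA y t
    simp only [Pi.add_def] at hsum
    rw [hzero] at hsum
    have := hsum.unique (hasDerivAt_const x (0 : ℝ))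
    linear_combination this
  -- t-derivative of eigenvalue equation
  have eC : ∀ x t : ℝ,
      Dt' (Dx (Dx Ψ)) (x, t) + Dt' U (x, t) * Ψ (x, t) + (U (x, t) + lam) * Dt' Ψ (x, t) = 0 := by
    intro x t
    have hA1 := hasDerivAt_Dt' hc x t
    have hA2 : HasDerivAt (fun t' => (U (x, t') + lam) * Ψ (x, t'))
        (Dt' U (x, t) * Ψ (x, t) + (U (x, t) + lam) * Dt' Ψ (x, t)) t :=
      ((hasDerivAt_Dt' hu x t).add_const lam).mul (hasDerivAt_Dt' hψ x t)
    have hsum := hA1.add hA2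
    have hzero : (fun t' => Dx (Dx Ψ) (x, t') + (U (x, t') + lam) * Ψ (x, t'))
        = fun _ : ℝ => (0 : ℝ) := funext fun s => eA x s
    simp only [Pi.add_def] at hsum
    rw [hzero] at hsum
    have := hsum.unique (hasDerivAt_const t (0 : ℝ))
    linear_combination this
  -- evolution equation translated
  have eD : ∀ x t : ℝ, Dt' Ψ (x, t) =
      α * Ψ (x, t) - 4 * Dx (Dx (Dx Ψ)) (x, t) - 6 * U (x, t) * Dx Ψ (x, t)
        - 3 * Dx U (x, t) * Ψ (x, t) := by
    intro x t
    have h := hevol x t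
    rw [e3ψ x t] at h
    have h1 : deriv (fun t' => ψ x t') t = Dt' Ψ (x, t) := (hasDerivAt_Dt' hψ x t).deriv
    have h2 : deriv (fun x' => ψ x' t) x = Dx Ψ (x, t) := (hasDerivAt_Dx hψ x t).deriv
    have h3 : deriv (fun x' => u x' t) x = Dx U (x, t) := (hasDerivAt_Dx hu x t).deriv
    rw [h1, h2, h3] at h
    exact h
  -- simplified evolution equation
  have eDf : ∀ x t : ℝ, Dt' Ψ (x, t) =
      α * Ψ (x, t) + Dx U (x, t) * Ψ (x, t) + (4 * lam - 2 * U (x, t)) * Dx Ψ (x, t) := by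
    intro x t
    linear_combination eD x t - 4 * eB x t
  -- x-derivative of simplified evolution equation
  have eE : ∀ x t : ℝ, Dx (Dt' Ψ) (x, t) =
      α * Dx Ψ (x, t) + Dx (Dx U) (x, t) * Ψ (x, t) - Dx U (x, t) * Dx Ψ (x, t)
        + (4 * lam - 2 * U (x, t)) * Dx (Dx Ψ) (x, t) := by
    intro x t
    have t1 := (hasDerivAt_Dx hψ x t).const_mul α
    have t2 := (hasDerivAt_Dx hU1 x t).mul (hasDerivAt_Dx hψ x t)
    have t3 : HasDerivAt (fun x' => 4 * lam - 2 * U (x', t)) (-(2 * Dx U (x, t))) x :=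
      ((hasDerivAt_Dx hu x t).const_mul 2).const_sub (4 * lam)
    have t4 := t3.mul (hasDerivAt_Dx hb x t)
    have h := (t1.add t2).add t4
    have hzero : (fun x' => α * Ψ (x', t) + Dx U (x', t) * Ψ (x', t)
        + (4 * lam - 2 * U (x', t)) * Dx Ψ (x', t)) = fun x' => Dt' Ψ (x', t) :=
      funext fun y => (eDf y t).symm
    simp only [Pi.add_def, Pi.mul_def, Pi.sub_def] at h
    rw [hzero] at h
    have := (hasDerivAt_Dx hW x t).unique h
    linear_combination this
  -- second x-derivative of simplified evolution equation
  have eF : ∀ x t : ℝ, Dx (Dx (Dt' Ψ)) (x, t) =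
      α * Dx (Dx Ψ) (x, t) + Dx (Dx (Dx U)) (x, t) * Ψ (x, t)
        - 3 * Dx U (x, t) * Dx (Dx Ψ) (x, t)
        + (4 * lam - 2 * U (x, t)) * Dx (Dx (Dx Ψ)) (x, t) := by
    intro x t
    have t1 := (hasDerivAt_Dx hb x t).const_mul α
    have t2 := (hasDerivAt_Dx hU2 x t).mul (hasDerivAt_Dx hψ x t)
    have t3 := (hasDerivAt_Dx hU1 x t).mul (hasDerivAt_Dx hb x t)
    have t4c : HasDerivAt (fun x' => 4 * lam - 2 * U (x', t)) (-(2 * Dx U (x, t))) x :=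
      ((hasDerivAt_Dx hu x t).const_mul 2).const_sub (4 * lam)
    have t4 := t4c.mul (hasDerivAt_Dx hc x t)
    have h := (((t1.add t2).sub t3).add t4)
    have hzero : (fun x' => (α * Dx Ψ (x', t) + Dx (Dx U) (x', t) * Ψ (x', t)
        - Dx U (x', t) * Dx Ψ (x', t)) + (4 * lam - 2 * U (x', t)) * Dx (Dx Ψ) (x', t))
        = fun x' => Dx (Dt' Ψ) (x', t) := by
      funext y
      have := eE y t
      linear_combination -this
    simp only [Pi.add_def, Pi.mul_def, Pi.sub_def] at h
    rw [hzero] at h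
    have := (hasDerivAt_Dx hdW x t).unique h
    linear_combination this
  -- commutation
  have eG : Dt' (Dx (Dx Ψ)) = Dx (Dx (Dt' Ψ)) := by
    have g1 : Dt' (Dx Ψ) = Dx (Dt' Ψ) := Dswap hψ
    have g2 : Dt' (Dx (Dx Ψ)) = Dx (Dt' (Dx Ψ)) := Dswap hb
    rw [g1] at g2
    exact g2
  -- finish
  intro x t
  have g1 : deriv (fun t' => u x t') t = Dt' U (x, t) := (hasDerivAt_Dt' hu x t).deriv
  have g3 : deriv (fun x' => u x' t) x = Dx U (x, t) := (hasDerivAt_Dx hu x t).deriv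
  have g2 : iteratedDeriv 3 (fun x' => u x' t) x = Dx (Dx (Dx U)) (x, t) := by
    have du' : (deriv fun x' => u x' t) = fun y => Dx U (y, t) :=
      funext fun y => (hasDerivAt_Dx hu y t).deriv
    rw [iteratedDeriv_succ, iteratedDeriv_succ, iteratedDeriv_one, du']
    have : (deriv fun y => Dx U (y, t)) = fun y => Dx (Dx U) (y, t) :=
      funext fun y => (hasDerivAt_Dx hU1 y t).deriv
    rw [this]
    exact (hasDerivAt_Dx hU2 x t).deriv
  rw [g1, g2, g3]
  show Dt' U (x, t) + Dx (Dx (Dx U)) (x, t) + 6 * U (x, t) * Dx U (x, t) = 0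
  have eGp : Dt' (Dx (Dx Ψ)) (x, t) = Dx (Dx (Dt' Ψ)) (x, t) := congrFun eG (x, t)
  have key : (Dt' U (x, t) + Dx (Dx (Dx U)) (x, t) + 6 * U (x, t) * Dx U (x, t)) * Ψ (x, t)
      = 0 := by
    linear_combination eC x t - eGp - eF x t - (U (x, t) + lam) * eDf x t
      + (3 * Dx U (x, t) - α) * eA x t - (4 * lam - 2 * U (x, t)) * eB x t
  have hΨne : Ψ (x, t) ≠ 0 := hne x t
  rcases mul_eq_zero.mp key with h | h
  · exact h
  · exact absurd h hΨne
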